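/- arXiv:1806.06212 — 2 statements merged into one kernel-verified Lean document; each statement's English description precedes it below -/
import Mathlib

section
/- Let G be a vertex-minimal counterexample to the claim that every planar graph with no 4-cycles is (0, 0, 117)-colorable. Let X be a set of degree-3 vertices of G inducing a path v1 v2 ... vk with k at least 2, and let x and y be the two neighbors of vk in G - X. Then for every (0, 0, 117)-coloring phi of G - X: phi(x) differs from phi(y), the third color c belongs to {phi(x), phi(y)}, and the vertex among x, y colored c has degree at least 116 in G. -/
open SimpleGraph

/-- `H` is a minor of `G`: branch sets are nonempty, connected, pairwise disjoint,
and edges of `H` are realized between branch sets. -/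
def SimpleGraph.IsMinor {W V : Type*} (H : SimpleGraph W) (G : SimpleGraph V) : Prop :=
  ∃ f : W → Set V, (∀ w, (f w).Nonempty) ∧ (∀ w, (G.induce (f w)).Connected) ∧
    (∀ w w', w ≠ w' → Disjoint (f w) (f w')) ∧
    (∀ w w', H.Adj w w' → ∃ a ∈ f w, ∃ b ∈ f w', G.Adj a b)

/-- A graph is planar iff it has no `K₅` minor and no `K₃,₃` minor (Wagner's theorem). -/
def SimpleGraph.Planar {V : Type*} (G : SimpleGraph V) : Prop :=
  ¬ (completeGraph (Fin 5)).IsMinor G ∧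
    ¬ (completeBipartiteGraph (Fin 3) (Fin 3)).IsMinor G

/-- `G` contains no cycle of length `n` (as a subgraph). -/
def SimpleGraph.HasNoCycleOfLength {V : Type*} (G : SimpleGraph V) (n : ℕ) : Prop :=
  ∀ (v : V) (w : G.Walk v v), w.IsCycle → w.length ≠ n

/-- `f` is a `(d 0, …, d (k-1))`-coloring of `G`: each vertex has at most `d (f v)`
neighbors in its own color class. -/
def SimpleGraph.IsDefectiveColoring {V : Type*} {k : ℕ} (G : SimpleGraph V)
    (d : Fin k → ℕ) (f : V → Fin k) : Prop :=
  ∀ v, {u | G.Adj v u ∧ f u = f v}.ncard ≤ d (f v)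

/-- `G` is `(d 0, …, d (k-1))`-colorable. -/
def SimpleGraph.DefectiveColorable {V : Type*} {k : ℕ} (G : SimpleGraph V)
    (d : Fin k → ℕ) : Prop :=
  ∃ f : V → Fin k, G.IsDefectiveColoring d f

open Classical in
noncomputable def pickc (F : Set (Fin 3)) : Fin 3 :=
  if (0:Fin 3) ∈ F then (if (1:Fin 3) ∈ F then 2 else 1) else 0

lemma pickc_spec (F : Set (Fin 3)) :
    (pickc F ≠ 2 ∧ pickc F ∉ F) ∨ (pickc F = 2 ∧ (0:Fin 3) ∈ F ∧ (1:Fin 3) ∈ F) := by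
  classical
  unfold pickc
  split_ifs with h0 h1
  · exact Or.inr ⟨rfl, h0, h1⟩
  · exact Or.inl ⟨by decide, h1⟩
  · exact Or.inl ⟨by decide, h0⟩

def forbc {V : Type} (G : SimpleGraph V) (X : Set V) (f : ↥Xᶜ → Fin 3) (v : V) : Set (Fin 3) :=
  {a | a ≠ 2 ∧ ∃ u : ↥Xᶜ, G.Adj v ↑u ∧ f u = a}

noncomputable def seqc {V : Type} (G : SimpleGraph V) (X : Set V) (f : ↥Xᶜ → Fin 3)
    (P : ℕ → V) : ℕ → Fin 3
  | 0 => pickc (forbc G X f (P 0))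
  | (i+1) => pickc (forbc G X f (P (i+1)) ∪ ({seqc G X f P i} \ {2}))

theorem stmt18 (V : Type) [Fintype V] (G : SimpleGraph V)
    (hp : G.Planar) (h4 : G.HasNoCycleOfLength 4)
    (hnc : ¬ G.DefectiveColorable ![0, 0, 117])
    (hmin : ∀ (W : Type) [Fintype W] (H : SimpleGraph W), H.Planar →
      H.HasNoCycleOfLength 4 → Fintype.card W < Fintype.card V →
      H.DefectiveColorable ![0, 0, 117])
    (k : ℕ) (hk : 2 ≤ k) (p : Fin k → V) (hinj : Function.Injective p)
    (hdeg3 : ∀ i, (G.neighborSet (p i)).ncard = 3)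
    (hpath : ∀ i j : Fin k, G.Adj (p i) (p j) ↔ ((i : ℕ) + 1 = j ∨ (j : ℕ) + 1 = i))
    (X : Set V) (hX : X = Set.range p)
    (x y : V) (hx : x ∉ X) (hy : y ∉ X) (hxy : x ≠ y)
    (hxadj : G.Adj (p ⟨k - 1, by omega⟩) x) (hyadj : G.Adj (p ⟨k - 1, by omega⟩) y)
    (f : ↥(Xᶜ) → Fin 3)
    (hf : (G.induce Xᶜ).IsDefectiveColoring ![0, 0, 117] f) :
    f ⟨x, hx⟩ ≠ f ⟨y, hy⟩ ∧ (f ⟨x, hx⟩ = 2 ∨ f ⟨y, hy⟩ = 2) ∧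
      (f ⟨x, hx⟩ = 2 → 116 ≤ (G.neighborSet x).ncard) ∧
      (f ⟨y, hy⟩ = 2 → 116 ≤ (G.neighborSet y).ncard) := by
  classical
  have hk1 : k - 1 < k := by omega
  have hk2 : k - 2 < k := by omega
  have hval0 : ∀ a : Fin 3, a ≠ 2 → (![0,0,117] : Fin 3 → ℕ) a = 0 := by decide
  have h117 : (![0,0,117] : Fin 3 → ℕ) 2 = 117 := by decide
  -- the negation of the conclusion
  by_contra hcon
  have hneg : f ⟨x, hx⟩ = f ⟨y, hy⟩ ∨ (f ⟨x,hx⟩ ≠ 2 ∧ f ⟨y,hy⟩ ≠ 2) ∨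
      (f ⟨x,hx⟩ = 2 ∧ (G.neighborSet x).ncard ≤ 115) ∨
      (f ⟨y,hy⟩ = 2 ∧ (G.neighborSet y).ncard ≤ 115) := by
    by_contra hn
    push_neg at hn
    obtain ⟨h1, h2, h3, h4'⟩ := hn
    refine hcon ⟨h1, ?_, fun e => by have := h3 e; omega, fun e => by have := h4' e; omega⟩
    by_cases e : f ⟨x,hx⟩ = 2
    · exact Or.inl e
    · exact Or.inr (h2 e)
  clear hcon
  -- vertex sequence
  set P : ℕ → V := fun i => p ⟨i % k, Nat.mod_lt i (by omega)⟩ with hPdef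
  have hPlt : ∀ (i:ℕ) (h : i < k), P i = p ⟨i, h⟩ := by
    intro i h
    simp only [hPdef]
    congr 1
    exact Fin.ext (Nat.mod_eq_of_lt h)
  set S : ℕ → Fin 3 := seqc G X f P with hSdef
  have hS0 : S 0 = pickc (forbc G X f (P 0)) := rfl
  have hSsucc : ∀ i, S (i+1) = pickc (forbc G X f (P (i+1)) ∪ ({S i} \ {2})) := fun i => rfl
  -- membership helpers
  have hmemX : ∀ {v : V}, v ∈ X → ∃ j : Fin k, p j = v := fun hv => by rwa [hX] at hv
  have hpX : ∀ j : Fin k, p j ∈ X := fun j => by rw [hX]; exact ⟨j, rfl⟩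
  -- four distinct neighbors is impossible
  have hfour : ∀ (i : Fin k) (a b c d : V), G.Adj (p i) a → G.Adj (p i) b → G.Adj (p i) c →
      G.Adj (p i) d → a ≠ b → a ≠ c → a ≠ d → b ≠ c → b ≠ d → c ≠ d → False := by
    intro i a b c d ha hb hc hd hab hac had hbc hbd hcd
    have hsub : ({a,b,c,d} : Set V) ⊆ G.neighborSet (p i) := by
      intro w hw
      simp only [Set.mem_insert_iff, Set.mem_singleton_iff] at hw
      rcases hw with rfl|rfl|rfl|rfl <;> assumption
    have hcard : ({a,b,c,d} : Set V).ncard = 4 := by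
      rw [Set.ncard_insert_of_notMem (by simp [hab, hac, had]) (Set.toFinite _),
        Set.ncard_insert_of_notMem (by simp [hbc, hbd]) (Set.toFinite _),
        Set.ncard_pair hcd]
    have hle := Set.ncard_le_ncard hsub (Set.toFinite _)
    rw [hdeg3 i, hcard] at hle
    omega
  -- S avoids forbidden colors when not 2
  have havoid : ∀ i, S i ≠ 2 → S i ∉ forbc G X f (P i) := by
    intro i h2
    cases i with
    | zero =>
      rcases pickc_spec (forbc G X f (P 0)) with ⟨_, hn⟩ | ⟨h, _⟩
      · rw [hS0]; exact hn
      · exact absurd (hS0.trans h) h2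
    | succ n =>
      rcases pickc_spec (forbc G X f (P (n+1)) ∪ ({S n} \ {2})) with ⟨_, hn⟩ | ⟨h, _⟩
      · rw [hSsucc n]; intro hm; exact hn (Or.inl hm)
      · exact absurd ((hSsucc n).trans h) h2
  -- consecutive vertices get different colors
  have hdiff : ∀ i, S (i+1) ≠ 2 → S i ≠ 2 → S (i+1) ≠ S i := by
    intro i h2 hp2
    rcases pickc_spec (forbc G X f (P (i+1)) ∪ ({S i} \ {2})) with ⟨_, hn⟩ | ⟨h, _⟩
    · intro he
      apply hn
      rw [← hSsucc i, he]
      exact Or.inr ⟨rfl, hp2⟩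
    · exact absurd ((hSsucc i).trans h) h2
  have hne_adj : ∀ (a b : ℕ), a + 1 = b → S a ≠ 2 → S b ≠ S a := by
    intro a b hab h2a
    subst hab
    by_cases h2b : S (a+1) = 2
    · intro e; exact h2a (by rw [← e, h2b])
    · exact hdiff a h2b h2a
  -- neighborhood of the last path vertex
  have hlastmem : G.neighborSet (p ⟨k-1,hk1⟩) = {p ⟨k-2, hk2⟩, x, y} := by
    symm
    apply Set.eq_of_subset_of_ncard_le
    · intro w hw
      simp only [Set.mem_insert_iff, Set.mem_singleton_iff] at hw
      rcases hw with rfl|rfl|rfl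
      · exact (hpath _ _).2 (Or.inr (show k-2+1 = k-1 by omega))
      · exact hxadj
      · exact hyadj
    · rw [hdeg3]
      have hax : p ⟨k-2,hk2⟩ ≠ x := fun e => hx (e ▸ hpX _)
      have hay : p ⟨k-2,hk2⟩ ≠ y := fun e => hy (e ▸ hpX _)
      rw [Set.ncard_insert_of_notMem (by simp [hax, hay]) (Set.toFinite _),
        Set.ncard_pair hxy]
    · exact Set.toFinite _
  -- a path vertex colored 2 with an outside neighbor colored 2 must be the last one
  have hkey : ∀ (i:ℕ) (hik : i < k) (u : ↥Xᶜ), S i = 2 → G.Adj (P i) ↑u → f u = 2 →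
      i = k - 1 := by
    intro i hik u h2 hadj hfu
    by_contra hne
    cases i with
    | zero =>
      rcases pickc_spec (forbc G X f (P 0)) with ⟨hn, _⟩ | ⟨_, h0, h1⟩
      · exact hn (hS0 ▸ h2)
      · obtain ⟨_, u1, hu1adj, hu1⟩ := h0
        obtain ⟨_, u2, hu2adj, hu2⟩ := h1
        have h1k : (1:ℕ) < k := by omega
        have hadj1 : G.Adj (P 0) (p ⟨1, h1k⟩) := by
          rw [hPlt 0 (by omega)]
          exact (hpath _ _).2 (Or.inl (show 0+1 = 1 by omega))
        rw [hPlt 0 (by omega)] at hadj hadj1 hu1adj hu2adj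
        refine hfour ⟨0, by omega⟩ (p ⟨1,h1k⟩) ↑u1 ↑u2 ↑u hadj1 hu1adj hu2adj hadj
          ?_ ?_ ?_ ?_ ?_ ?_
        · exact fun e => u1.2 (e ▸ hpX _)
        · exact fun e => u2.2 (e ▸ hpX _)
        · exact fun e => u.2 (e ▸ hpX _)
        · intro e
          have : u1 = u2 := Subtype.coe_injective e
          rw [this, hu2] at hu1
          exact absurd hu1 (by decide)
        · intro e
          have : u1 = u := Subtype.coe_injective e
          rw [this, hfu] at hu1
          exact absurd hu1 (by decide)
        · intro e
          have : u2 = u := Subtype.coe_injective e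
          rw [this, hfu] at hu2
          exact absurd hu2 (by decide)
    | succ n =>
      have hn1 : n < k := by omega
      have hn2 : n + 2 < k := by omega
      rcases pickc_spec (forbc G X f (P (n+1)) ∪ ({S n} \ {2})) with ⟨hn', _⟩ | ⟨_, h0, h1⟩
      · exact hn' ((hSsucc n) ▸ h2)
      · have hex : ∃ a : Fin 3, a ∈ forbc G X f (P (n+1)) := by
          rcases h0 with h0f | h0s
          · exact ⟨0, h0f⟩
          · rcases h1 with h1f | h1s
            · exact ⟨1, h1f⟩
            · rw [Set.mem_diff, Set.mem_singleton_iff] at h0s h1s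
              exact absurd (h0s.1.trans h1s.1.symm) (by decide)
        obtain ⟨a, hane, u', hu'adj, hu'⟩ := hex
        have hadjl : G.Adj (P (n+1)) (p ⟨n, hn1⟩) := by
          rw [hPlt (n+1) hik]
          exact (hpath _ _).2 (Or.inr (show n+1 = n+1 by omega))
        have hadjr : G.Adj (P (n+1)) (p ⟨n+2, hn2⟩) := by
          rw [hPlt (n+1) hik]
          exact (hpath _ _).2 (Or.inl (show n+1+1 = n+2 by omega))
        rw [hPlt (n+1) hik] at hadj hadjl hadjr hu'adj
        refine hfour ⟨n+1, hik⟩ (p ⟨n, hn1⟩) (p ⟨n+2, hn2⟩) ↑u ↑u' hadjl hadjr hadj hu'adj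
          ?_ ?_ ?_ ?_ ?_ ?_
        · intro e
          have := hinj e
          rw [Fin.mk.injEq] at this
          omega
        · exact fun e => u.2 (e.symm ▸ hpX _)
        · exact fun e => u'.2 (e.symm ▸ hpX _)
        · exact fun e => u.2 (e.symm ▸ hpX _)
        · exact fun e => u'.2 (e.symm ▸ hpX _)
        · intro e
          have : u = u' := Subtype.coe_injective e
          rw [← this, hfu] at hu'
          exact hane (hu'.symm)
  -- if both x and y are colored 2, the last vertex is not colored 2
  have hlastne : f ⟨x,hx⟩ = 2 → f ⟨y,hy⟩ = 2 → S (k-1) ≠ 2 := by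
    intro hfx hfy
    have hforb : forbc G X f (P (k-1)) = ∅ := by
      ext a
      simp only [Set.mem_empty_iff_false, iff_false]
      rintro ⟨hane, u, huadj, hufa⟩
      have hmem : ↑u ∈ G.neighborSet (p ⟨k-1,hk1⟩) := by
        rw [← hPlt (k-1) hk1]; exact huadj
      rw [hlastmem] at hmem
      simp only [Set.mem_insert_iff, Set.mem_singleton_iff] at hmem
      rcases hmem with h|h|h
      · exact u.2 (h ▸ hpX _)
      · have : u = ⟨x, hx⟩ := Subtype.ext h
        rw [this, hfx] at hufa
        exact hane hufa.symm
      · have : u = ⟨y, hy⟩ := Subtype.ext h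
        rw [this, hfy] at hufa
        exact hane hufa.symm
    have e : k - 1 = (k-2) + 1 := by omega
    intro h2
    rw [e] at h2 hforb
    rw [hSsucc (k-2)] at h2
    rcases pickc_spec (forbc G X f (P ((k-2)+1)) ∪ ({S (k-2)} \ {2})) with ⟨hn, _⟩ | ⟨_, h0, h1⟩
    · exact hn h2
    · rw [hforb, Set.empty_union, Set.mem_diff, Set.mem_singleton_iff] at h0 h1
      exact absurd (h0.1.trans h1.1.symm) (by decide)
  -- the extended coloring
  set g : V → Fin 3 := fun v =>
    if h : ∃ j : Fin k, p j = v then S (Classical.choose h : Fin k).val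
    else f ⟨v, fun hv => h (hmemX hv)⟩ with hgdef
  have hgp : ∀ j : Fin k, g (p j) = S j.val := by
    intro j
    have hex : ∃ j' : Fin k, p j' = p j := ⟨j, rfl⟩
    have hch : Classical.choose hex = j := hinj (Classical.choose_spec hex)
    simp only [hgdef]
    rw [dif_pos hex, hch]
  have hgo : ∀ (v) (hv : v ∉ X), g v = f ⟨v, hv⟩ := by
    intro v hv
    have hnex : ¬ ∃ j : Fin k, p j = v := by
      rintro ⟨j, rfl⟩
      exact hv (hpX j)
    simp only [hgdef]
    rw [dif_neg hnex]
  -- the contradiction: g is a valid defective coloring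
  apply hnc
  refine ⟨g, fun v => ?_⟩
  by_cases hv : ∃ j : Fin k, p j = v
  · obtain ⟨j, rfl⟩ := hv
    rw [hgp j]
    by_cases h2 : S j.val = 2
    · rw [h2, h117]
      have hsub : {u | G.Adj (p j) u ∧ g u = 2} ⊆ G.neighborSet (p j) := fun w hw => hw.1
      have hle := Set.ncard_le_ncard hsub (Set.toFinite _)
      rw [hdeg3 j] at hle
      omega
    · have hempty : {u | G.Adj (p j) u ∧ g u = S j.val} = ∅ := by
        ext w
        simp only [Set.mem_setOf_eq, Set.mem_empty_iff_false, iff_false, not_and]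
        intro hadj hgw
        by_cases hw : ∃ j' : Fin k, p j' = w
        · obtain ⟨j', rfl⟩ := hw
          rw [hgp j'] at hgw
          rcases (hpath j j').1 hadj with hj | hj
          · by_cases h2' : S j'.val = 2
            · rw [h2'] at hgw; exact h2 hgw.symm
            · exact hne_adj j.val j'.val hj h2 hgw
          · by_cases h2' : S j'.val = 2
            · rw [h2'] at hgw; exact h2 hgw.symm
            · exact hne_adj j'.val j.val hj h2' hgw.symm
        · have hwX : w ∉ X := fun hm => hw (hmemX hm)
          rw [hgo w hwX] at hgw
          refine havoid j.val h2 ⟨h2, ⟨w, hwX⟩, ?_, hgw⟩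
          rw [hPlt j.val j.isLt, Fin.eta]
          exact hadj
      rw [hempty, Set.ncard_empty]
      exact Nat.zero_le _
  · have hvX : v ∉ X := fun hm => hv (hmemX hm)
    rw [hgo v hvX]
    by_cases h2 : f ⟨v, hvX⟩ = 2
    · rw [h2, h117]
      by_cases hlastT : G.Adj v (p ⟨k-1, hk1⟩) ∧ g (p ⟨k-1, hk1⟩) = 2
      · -- then v ∈ {x, y} and we use the degree bound
        obtain ⟨hadjv, hglast⟩ := hlastT
        have hvmem : v ∈ G.neighborSet (p ⟨k-1,hk1⟩) := hadjv.symm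
        rw [hlastmem] at hvmem
        simp only [Set.mem_insert_iff, Set.mem_singleton_iff] at hvmem
        have hS2 : S (k-1) = 2 := by
          rw [hgp ⟨k-1,hk1⟩] at hglast
          exact hglast
        have hnb : ¬(f ⟨x,hx⟩ = 2 ∧ f ⟨y,hy⟩ = 2) := fun ⟨ha,hb⟩ => hlastne ha hb hS2
        have hdbound : (G.neighborSet v).ncard ≤ 115 := by
          rcases hvmem with h|h|h
          · exact absurd (h ▸ hpX ⟨k-2,hk2⟩ : v ∈ X) hvX
          · -- v = x
            have hfx : f ⟨x, hx⟩ = 2 := (Subtype.ext h : (⟨v,hvX⟩ : ↥Xᶜ) = ⟨x,hx⟩) ▸ h2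
            rw [h]
            rcases hneg with h'|h'|h'|h'
            · exact absurd ⟨hfx, h'.symm.trans hfx⟩ hnb
            · exact absurd hfx h'.1
            · exact h'.2
            · exact absurd ⟨hfx, h'.1⟩ hnb
          · -- v = y
            have hfy : f ⟨y, hy⟩ = 2 := (Subtype.ext h : (⟨v,hvX⟩ : ↥Xᶜ) = ⟨y,hy⟩) ▸ h2
            rw [h]
            rcases hneg with h'|h'|h'|h'
            · exact absurd ⟨h'.trans hfy, hfy⟩ hnb
            · exact absurd hfy h'.2
            · exact absurd ⟨h'.1, hfy⟩ hnb
            · exact h'.2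
        have hsub : {w | G.Adj v w ∧ g w = 2} ⊆ G.neighborSet v := fun w hw => hw.1
        have hle := Set.ncard_le_ncard hsub (Set.toFinite _)
        omega
      · -- all same-colored neighbors are outside X
        have hTsub : {w | G.Adj v w ∧ g w = 2} ⊆
            Subtype.val '' {u : ↥Xᶜ | (G.induce Xᶜ).Adj ⟨v, hvX⟩ u ∧ f u = f ⟨v, hvX⟩} := by
          intro w hw
          obtain ⟨hadj, hgw⟩ := hw
          by_cases hwex : ∃ j : Fin k, p j = w
          · obtain ⟨j, rfl⟩ := hwex
            rw [hgp j] at hgw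
            have hkval := hkey j.val j.isLt ⟨v, hvX⟩ hgw
              (by rw [hPlt j.val j.isLt, Fin.eta]; exact hadj.symm) h2
            have hjj : j = ⟨k-1, hk1⟩ := Fin.ext hkval
            rw [hjj] at hadj hgw
            exact absurd ⟨hadj, by rw [hgp ⟨k-1,hk1⟩]; exact hgw⟩ hlastT
          · have hwX : w ∉ X := fun hm => hwex (hmemX hm)
            rw [hgo w hwX] at hgw
            exact ⟨⟨w, hwX⟩, ⟨hadj, hgw.trans h2.symm⟩, rfl⟩
        have hb := Set.ncard_le_ncard hTsub (Set.toFinite _)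
        rw [Set.ncard_image_of_injective _ Subtype.coe_injective] at hb
        have hfb := hf ⟨v, hvX⟩
        have hval : (![0,0,117] : Fin 3 → ℕ) (f ⟨v, hvX⟩) = 117 := by rw [h2]; exact h117
        rw [hval] at hfb
        exact le_trans hb hfb
    · rw [hval0 _ h2]
      have hempty : {w | G.Adj v w ∧ g w = f ⟨v, hvX⟩} = ∅ := by
        ext w
        simp only [Set.mem_setOf_eq, Set.mem_empty_iff_false, iff_false, not_and]
        intro hadj hgw
        by_cases hwex : ∃ j : Fin k, p j = w
        · obtain ⟨j, rfl⟩ := hwex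
          rw [hgp j] at hgw
          have h2' : S j.val ≠ 2 := by rw [hgw]; exact h2
          refine havoid j.val h2' ⟨h2', ⟨v, hvX⟩, ?_, hgw.symm⟩
          rw [hPlt j.val j.isLt, Fin.eta]
          exact hadj.symm
        · have hwX : w ∉ X := fun hm => hwex (hmemX hm)
          rw [hgo w hwX] at hgw
          have hfb := hf ⟨v, hvX⟩
          rw [hval0 _ h2] at hfb
          have hfe : {u | (G.induce Xᶜ).Adj ⟨v, hvX⟩ u ∧ f u = f ⟨v, hvX⟩} = ∅ :=
            (Set.ncard_eq_zero (Set.toFinite _)).1 (Nat.le_zero.1 hfb)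
          exact Set.eq_empty_iff_forall_notMem.1 hfe ⟨w, hwX⟩ ⟨hadj, hgw⟩
      rw [hempty, Set.ncard_empty]
end

section
/- Let G be a vertex-minimal counterexample to the claim that every planar graph with no 4-cycles is (0, 0, 117)-colorable. Let X be a set of degree-3 vertices of G inducing a path v1 v2 ... v_{2k} on an even number of vertices, let u_i be a neighbor of v_i in G - X for each i, and let x and y be the neighbors in G - X of v1 and v_{2k} other than u1 and u_{2k}, respectively. If phi is a (0, 0, 117)-coloring of G - X with phi(u_i) = c for all i (where c is the third color), then phi(x) = phi(y). -/
open SimpleGraph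

lemma nbhd_eq3 {V : Type} [Fintype V] (G : SimpleGraph V) (v a b c : V)
    (h : (G.neighborSet v).ncard = 3) (hab : a ≠ b) (hac : a ≠ c) (hbc : b ≠ c)
    (ha : G.Adj v a) (hb : G.Adj v b) (hc : G.Adj v c) :
    G.neighborSet v = {a, b, c} := by
  refine (Set.eq_of_subset_of_ncard_le ?_ ?_ (Set.toFinite _)).symm
  · intro w hw
    rcases hw with rfl | rfl | rfl
    · exact ha
    · exact hb
    · exact hc
  · rw [h, Set.ncard_insert_of_notMem (by simp [hab, hac]), Set.ncard_pair hbc]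

lemma choose_st : ∀ a b : Fin 3, a ≠ b →
    ∃ s t : Fin 3, s ≠ 2 ∧ t ≠ 2 ∧ s ≠ t ∧ s ≠ a ∧ t ≠ b := by decide


theorem stmt19 (V : Type) [Fintype V] (G : SimpleGraph V)
    (hp : G.Planar) (h4 : G.HasNoCycleOfLength 4)
    (hnc : ¬ G.DefectiveColorable ![0, 0, 117])
    (hmin : ∀ (W : Type) [Fintype W] (H : SimpleGraph W), H.Planar →
      H.HasNoCycleOfLength 4 → Fintype.card W < Fintype.card V →
      H.DefectiveColorable ![0, 0, 117])
    (k : ℕ) (hk : 1 ≤ k) (p : Fin (2 * k) → V) (hinj : Function.Injective p)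
    (hdeg3 : ∀ i, (G.neighborSet (p i)).ncard = 3)
    (hpath : ∀ i j : Fin (2 * k), G.Adj (p i) (p j) ↔
      ((i : ℕ) + 1 = j ∨ (j : ℕ) + 1 = i))
    (X : Set V) (hX : X = Set.range p)
    (u : Fin (2 * k) → V) (hu : ∀ i, u i ∉ X) (huadj : ∀ i, G.Adj (p i) (u i))
    (x y : V) (hx : x ∉ X) (hy : y ∉ X)
    (hxu : x ≠ u ⟨0, by omega⟩) (hyu : y ≠ u ⟨2 * k - 1, by omega⟩)
    (hxadj : G.Adj (p ⟨0, by omega⟩) x) (hyadj : G.Adj (p ⟨2 * k - 1, by omega⟩) y)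
    (f : ↥(Xᶜ) → Fin 3)
    (hf : (G.induce Xᶜ).IsDefectiveColoring ![0, 0, 117] f)
    (huc : ∀ i, f ⟨u i, hu i⟩ = 2) :
    f ⟨x, hx⟩ = f ⟨y, hy⟩ := by
  classical
  by_contra hne
  obtain ⟨s, t, hs2, ht2, hst, hsx, hty⟩ := choose_st _ _ hne
  -- the neighbor structure of path vertices
  have hnbr : ∀ (i : Fin (2 * k)) w, G.Adj (p i) w →
      w = u i ∨ (∃ j : Fin (2 * k), ((i : ℕ) + 1 = j ∨ (j : ℕ) + 1 = i) ∧ w = p j) ∨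
      ((i : ℕ) = 0 ∧ w = x) ∨ ((i : ℕ) = 2 * k - 1 ∧ w = y) := by
    intro i w hadj
    have hwmem : w ∈ G.neighborSet (p i) := hadj
    by_cases hi0 : (i : ℕ) = 0
    · have hieq : i = ⟨0, by omega⟩ := by ext; simpa using hi0
      have h1 : (1 : ℕ) < 2 * k := by omega
      have hxu' : x ≠ u i := by rw [hieq]; exact hxu
      have hxadj' : G.Adj (p i) x := by rw [hieq]; exact hxadj
      have heq := nbhd_eq3 G (p i) (p ⟨1, h1⟩) (u i) x
        (hdeg3 _)
        (by intro h; exact hu i (hX ▸ ⟨_, h⟩))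
        (by intro h; exact hx (hX ▸ ⟨_, h⟩))
        (fun h => hxu' h.symm)
        ((hpath _ _).2 (by left; simp [hi0]))
        (huadj _) hxadj'
      rw [heq] at hwmem
      rcases hwmem with rfl | rfl | rfl
      · exact Or.inr (Or.inl ⟨⟨1, h1⟩, by left; simp [hi0], rfl⟩)
      · exact Or.inl rfl
      · exact Or.inr (Or.inr (Or.inl ⟨hi0, rfl⟩))
    · by_cases hil : (i : ℕ) = 2 * k - 1
      · have hieq : i = ⟨2 * k - 1, by omega⟩ := by ext; simpa using hil
        have h1 : 2 * k - 2 < 2 * k := by omega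
        have hyu' : y ≠ u i := by rw [hieq]; exact hyu
        have hyadj' : G.Adj (p i) y := by rw [hieq]; exact hyadj
        have heq := nbhd_eq3 G (p i) (p ⟨2 * k - 2, h1⟩) (u i) y
          (hdeg3 _)
          (by intro h; exact hu i (hX ▸ ⟨_, h⟩))
          (by intro h; exact hy (hX ▸ ⟨_, h⟩))
          (fun h => hyu' h.symm)
          ((hpath _ _).2 (by right; simp; omega))
          (huadj _) hyadj'
        rw [heq] at hwmem
        rcases hwmem with rfl | rfl | rfl
        · exact Or.inr (Or.inl ⟨⟨2 * k - 2, h1⟩, by right; simp; omega, rfl⟩)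
        · exact Or.inl rfl
        · exact Or.inr (Or.inr (Or.inr ⟨hil, rfl⟩))
      · have hlt : (i : ℕ) < 2 * k := i.2
        have hm1 : (i : ℕ) - 1 < 2 * k := by omega
        have hp1 : (i : ℕ) + 1 < 2 * k := by omega
        have hne1 : (⟨(i : ℕ) - 1, hm1⟩ : Fin (2 * k)) ≠ ⟨(i : ℕ) + 1, hp1⟩ := by
          simp only [ne_eq, Fin.mk.injEq]; omega
        have heq := nbhd_eq3 G (p i) (p ⟨(i : ℕ) - 1, hm1⟩) (p ⟨(i : ℕ) + 1, hp1⟩) (u i)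
          (hdeg3 _)
          (fun h => hne1 (hinj h))
          (by intro h; exact hu i (hX ▸ ⟨_, h⟩))
          (by intro h; exact hu i (hX ▸ ⟨_, h⟩))
          ((hpath _ _).2 (by right; simp; omega))
          ((hpath _ _).2 (by left; simp))
          (huadj _)
        rw [heq] at hwmem
        rcases hwmem with rfl | rfl | rfl
        · exact Or.inr (Or.inl ⟨_, by right; simp; omega, rfl⟩)
        · exact Or.inr (Or.inl ⟨_, by left; simp, rfl⟩)
        · exact Or.inl rfl
  -- the extended coloring
  set idx : V → Fin (2 * k) := fun v =>
    if h : ∃ i, p i = v then h.choose else ⟨0, by omega⟩ with hidx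
  have hidxp : ∀ i, idx (p i) = i := by
    intro i
    have h : ∃ j, p j = p i := ⟨i, rfl⟩
    simp only [hidx, dif_pos h]
    exact hinj h.choose_spec
  set col : Fin (2 * k) → Fin 3 := fun i => if Even (i : ℕ) then s else t with hcoldef
  set g : V → Fin 3 := fun v => if h : v ∈ X then col (idx v) else f ⟨v, h⟩ with hg
  have hgX : ∀ i, g (p i) = col i := by
    intro i
    have hmem : p i ∈ X := by rw [hX]; exact ⟨i, rfl⟩
    simp only [hg, dif_pos hmem, hidxp]
  have hgnX : ∀ v (h : v ∉ X), g v = f ⟨v, h⟩ := fun v h => by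
    simp only [hg, dif_neg h]
  have hcol2 : ∀ i, col i ≠ 2 := by
    intro i; simp only [hcoldef]; split <;> assumption
  -- a same-colored neighbor of a non-X vertex is not in X
  have hkey : ∀ v (hv : v ∉ X) (i : Fin (2 * k)), G.Adj (p i) v → g v ≠ col i := by
    intro v hv i hadj hcv
    rcases hnbr i v hadj with rfl | ⟨j, hj, rfl⟩ | ⟨hi0, rfl⟩ | ⟨hil, rfl⟩
    · rw [hgnX _ hv, huc] at hcv
      exact hcol2 i hcv.symm
    · exact hv (hX ▸ ⟨j, rfl⟩)
    · rw [hgnX _ hv] at hcv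
      have hcs : col i = s := by
        simp only [hcoldef]
        rw [if_pos (by rw [hi0]; exact Even.zero)]
      rw [hcs] at hcv
      exact hsx hcv.symm
    · rw [hgnX _ hv] at hcv
      have hct : col i = t := by
        simp only [hcoldef]
        rw [if_neg (by rw [Nat.even_iff]; omega)]
      rw [hct] at hcv
      exact hty hcv.symm
  apply hnc
  refine ⟨g, fun v => ?_⟩
  by_cases hv : v ∈ X
  · -- path vertex: no same-colored neighbors at all
    rw [hX] at hv
    obtain ⟨i, rfl⟩ := hv
    have hempty : {w | G.Adj (p i) w ∧ g w = g (p i)} = ∅ := by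
      ext w
      simp only [Set.mem_setOf_eq, Set.mem_empty_iff_false, iff_false, not_and]
      intro hadj hcw
      rw [hgX i] at hcw
      by_cases hwX : w ∈ X
      · -- w is a path vertex; adjacent path vertices have different colors
        rw [hX] at hwX
        obtain ⟨j, rfl⟩ := hwX
        have hij := (hpath i j).1 hadj
        have hji : Even (j : ℕ) ↔ ¬ Even (i : ℕ) := by
          rw [Nat.even_iff, Nat.even_iff]; omega
        rw [hgX j] at hcw
        simp only [hcoldef] at hcw
        split_ifs at hcw with h1 h2 h2
        · exact (hji.1 h1) h2
        · exact hst hcw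
        · exact hst hcw.symm
        · exact h1 (hji.2 h2)
      · exact hkey w hwX i hadj hcw
    rw [hempty, Set.ncard_empty]
    exact Nat.zero_le _
  · -- non-path vertex: same neighbors as before
    have hset : {w | G.Adj v w ∧ g w = g v} =
        Subtype.val '' {w : ↥Xᶜ | (G.induce Xᶜ).Adj ⟨v, hv⟩ w ∧ f w = f ⟨v, hv⟩} := by
      ext w
      simp only [Set.mem_setOf_eq, Set.mem_image, Subtype.exists, exists_and_right,
        exists_eq_right]
      constructor
      · rintro ⟨hadj, hcw⟩
        have hwX : w ∉ X := by
          intro hwX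
          obtain ⟨i, rfl⟩ := hX ▸ hwX
          rw [hgX i] at hcw
          exact hkey v hv i hadj.symm hcw.symm
        refine ⟨hwX, ?_, ?_⟩
        · exact hadj
        · rw [hgnX w hwX, hgnX v hv] at hcw; exact hcw
      · rintro ⟨hwX, hadj, hfw⟩
        refine ⟨hadj, ?_⟩
        rw [hgnX w hwX, hgnX v hv]
        exact hfw
    rw [hset, Set.ncard_image_of_injective _ Subtype.val_injective, hgnX v hv]
    exact hf ⟨v, hv⟩
end
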